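/- arXiv:2105.13339 — 3 statements merged into one kernel-verified Lean document; each statement's English description precedes it below -/
import Mathlib

section
/- For every Z ∈ m and every A ∈ m, the element (exp(ad_Z) - exp(ad_{-Z}))(A) lies in k; consequently ⁅Υ, (exp(ad_Z) - exp(ad_{-Z}))(A)⁆ = 0. -/
/-!
For `Z ∈ m`, `ad_Z` swaps `m` and `k`, so on `A ∈ m` even powers of `ad_Z` stay in `m` and odd
powers land in `k`. In `exp(ad_Z) - exp(-ad_Z)` the even terms cancel, and the remaining series
of odd terms converges in the closed subspace `k`, which `ad_Υ` kills.
-/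

noncomputable section

variable {L : Type*} [NormedAddCommGroup L] [NormedSpace ℂ L] [FiniteDimensional ℂ L]

/-- The adjoint operator ad_Z = ⁅Z, ·⁆, as a continuous ℂ-linear endomorphism of L, where the
Lie bracket of L is given by the ℂ-bilinear map bra. -/
def adC (bra : L →ₗ[ℂ] L →ₗ[ℂ] L) (Z : L) : L →L[ℂ] L :=
  LinearMap.toContinuousLinearMap (bra Z)

/-- exp T = Σ_{n ≥ 0} Tⁿ/n!, the exponential in the Banach algebra of continuous ℂ-linear
endomorphisms of L. -/
def expOp (T : L →L[ℂ] L) : L →L[ℂ] L :=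
  ∑' n : ℕ, ((n.factorial : ℂ)⁻¹) • T ^ n

/-- E_Z = Σ_{n ≥ 0} ad_Z^{2n}/(2n+1)!. -/
def Eop (bra : L →ₗ[ℂ] L →ₗ[ℂ] L) (Z : L) : L →L[ℂ] L :=
  ∑' n : ℕ, (((2 * n + 1).factorial : ℂ)⁻¹) • adC bra Z ^ (2 * n)

/-- F_Z = Σ_{n ≥ 1} ad_Z^{2n-1}/(2n)!. -/
def Fop (bra : L →ₗ[ℂ] L →ₗ[ℂ] L) (Z : L) : L →L[ℂ] L :=
  ∑' n : ℕ, (((2 * n + 2).factorial : ℂ)⁻¹) • adC bra Z ^ (2 * n + 1)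

/-- S_Z = Σ_{n ≥ 0} ad_Z^{2n}/(2n)!. -/
def Sop (bra : L →ₗ[ℂ] L →ₗ[ℂ] L) (Z : L) : L →L[ℂ] L :=
  ∑' n : ℕ, (((2 * n).factorial : ℂ)⁻¹) • adC bra Z ^ (2 * n)


theorem adC_neg (bra : L →ₗ[ℂ] L →ₗ[ℂ] L) (Z : L) : adC bra (-Z) = -adC bra Z := by
  ext x
  simp [adC]

section Swap

variable {R E : Type*} [Ring R] [AddCommGroup E] [Module R E] [TopologicalSpace E]
  [IsTopologicalAddGroup E] {M K : Submodule R E} {T : E →L[R] E}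

theorem pow_two_mul_apply_mem (hMK : ∀ x ∈ M, T x ∈ K) (hKM : ∀ x ∈ K, T x ∈ M)
    {x : E} (hx : x ∈ M) (n : ℕ) : (T ^ (2 * n)) x ∈ M := by
  induction n with
  | zero => simpa using hx
  | succ n ih =>
    rw [mul_add_one, add_comm, pow_add, sq, mul_assoc, mul_apply_eq_comp, mul_apply_eq_comp]
    exact hKM _ (hMK _ ih)

theorem pow_sub_neg_pow_apply_mem (hMK : ∀ x ∈ M, T x ∈ K) (hKM : ∀ x ∈ K, T x ∈ M)
    {x : E} (hx : x ∈ M) (n : ℕ) : (T ^ n - (-T) ^ n) x ∈ K := by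
  rcases Nat.even_or_odd' n with ⟨c, rfl | rfl⟩
  · simp [Even.neg_pow (even_two_mul c)]
  · have hodd : (T ^ (2 * c + 1)) x ∈ K := by
      rw [pow_succ', mul_apply_eq_comp]
      exact hMK _ (pow_two_mul_apply_mem hMK hKM hx c)
    rw [Odd.neg_pow (odd_two_mul_add_one c), sub_neg_eq_add, ← two_smul ℕ,
      smul_apply]
    exact K.smul_of_tower_mem 2 hodd

end Swap

section Exp

variable {L : Type*} [NormedAddCommGroup L] [NormedSpace ℂ L] [CompleteSpace L]

theorem expOp_sub_expOp_neg (T : L →L[ℂ] L) :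
    expOp T - expOp (-T) = ∑' n : ℕ, (n.factorial : ℂ)⁻¹ • (T ^ n - (-T) ^ n) := by
  simp_rw [expOp, smul_sub]
  exact ((NormedSpace.expSeries_summable' T).tsum_sub
    (NormedSpace.expSeries_summable' (-T))).symm

theorem expOp_sub_expOp_neg_apply_mem {M K : Submodule ℂ L} (hK : IsClosed (K : Set L))
    {T : L →L[ℂ] L} (hMK : ∀ x ∈ M, T x ∈ K) (hKM : ∀ x ∈ K, T x ∈ M) {A : L} (hA : A ∈ M) :
    expOp T A - expOp (-T) A ∈ K := by
  let evalA := ContinuousLinearMap.apply ℂ L A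
  show evalA (expOp T - expOp (-T)) ∈ K
  rw [expOp_sub_expOp_neg]
  refine tsum_mem (s := K.comap (evalA : (L →L[ℂ] L) →ₗ[ℂ] L)) (hK.preimage evalA.continuous)
    fun n => ?_
  exact Submodule.smul_mem _ _ (pow_sub_neg_pow_apply_mem hMK hKM hA n)

end Exp

section Bracket

variable {R E : Type*} [CommRing R] [AddCommGroup E] [Module R E] {bra : E →ₗ[R] E →ₗ[R] E}
  {k mp mn : Submodule R E}

theorem bra_mem_of_mem_sup_of_mem_sup (halt : bra.IsAlt)
    (hpp : ∀ x ∈ mp, ∀ y ∈ mp, bra x y = 0) (hnn : ∀ x ∈ mn, ∀ y ∈ mn, bra x y = 0)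
    (hpn : ∀ x ∈ mp, ∀ y ∈ mn, bra x y ∈ k) {x y : E} (hx : x ∈ mp ⊔ mn) (hy : y ∈ mp ⊔ mn) :
    bra x y ∈ k := by
  obtain ⟨xp, hxp, xn, hxn, rfl⟩ := Submodule.mem_sup.mp hx
  obtain ⟨yp, hyp, yn, hyn, rfl⟩ := Submodule.mem_sup.mp hy
  have hnp : bra xn yp ∈ k := by
    rw [← halt.neg]
    exact k.neg_mem (hpn yp hyp xn hxn)
  simp only [map_add, LinearMap.add_apply, hpp xp hxp yp hyp, hnn xn hxn yn hyn, zero_add,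
    add_zero]
  exact k.add_mem hnp (hpn xp hxp yn hyn)

theorem bra_mem_sup_of_mem_sup_of_mem (halt : bra.IsAlt)
    (hkp : ∀ x ∈ k, ∀ y ∈ mp, bra x y ∈ mp) (hkn : ∀ x ∈ k, ∀ y ∈ mn, bra x y ∈ mn)
    {x y : E} (hx : x ∈ mp ⊔ mn) (hy : y ∈ k) : bra x y ∈ mp ⊔ mn := by
  obtain ⟨xp, hxp, xn, hxn, rfl⟩ := Submodule.mem_sup.mp hx
  rw [← halt.neg, map_add]
  exact neg_mem (Submodule.add_mem_sup (hkp y hy xp hxp) (hkn y hy xn hxn))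

end Bracket

theorem statement7_general {L : Type*} [NormedAddCommGroup L] [NormedSpace ℂ L] [FiniteDimensional ℂ L]
    (bra : L →ₗ[ℂ] L →ₗ[ℂ] L)
    (halt : ∀ x : L, bra x x = 0)
    (k mp mn : Submodule ℂ L)
    (hkp : ∀ x ∈ k, ∀ y ∈ mp, bra x y ∈ mp)
    (hkn : ∀ x ∈ k, ∀ y ∈ mn, bra x y ∈ mn)
    (hpp : ∀ x ∈ mp, ∀ y ∈ mp, bra x y = 0)
    (hnn : ∀ x ∈ mn, ∀ y ∈ mn, bra x y = 0)
    (hpn : ∀ x ∈ mp, ∀ y ∈ mn, bra x y ∈ k)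
    (Υ : L)
    (hUk : ∀ X ∈ k, bra Υ X = 0)
    (Z A : L) (hZ : Z ∈ mp ⊔ mn) (hA : A ∈ mp ⊔ mn) :
    expOp (adC bra Z) A - expOp (adC bra (-Z)) A ∈ k ∧
    bra Υ (expOp (adC bra Z) A - expOp (adC bra (-Z)) A) = 0 := by
  have hmem : expOp (adC bra Z) A - expOp (adC bra (-Z)) A ∈ k := by
    have : CompleteSpace L := FiniteDimensional.complete ℂ L
    rw [adC_neg]
    exact expOp_sub_expOp_neg_apply_mem k.closed_of_finiteDimensional
      (fun x hx => bra_mem_of_mem_sup_of_mem_sup halt hpp hnn hpn hZ hx)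
      (fun x hx => bra_mem_sup_of_mem_sup_of_mem halt hkp hkn hZ hx) hA
  exact ⟨hmem, hUk _ hmem⟩

/-- For Z, A ∈ m, (exp(ad_Z) - exp(ad_{-Z}))(A) lies in k; consequently ⁅Υ, (exp(ad_Z) - exp(ad_{-Z}))(A)⁆ = 0. -/
theorem statement7 {L : Type*} [NormedAddCommGroup L] [NormedSpace ℂ L] [FiniteDimensional ℂ L]
    (bra : L →ₗ[ℂ] L →ₗ[ℂ] L)
    (halt : ∀ x : L, bra x x = 0)
    (hjac : ∀ x y z : L, bra x (bra y z) = bra (bra x y) z + bra y (bra x z))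
    (k mp mn : Submodule ℂ L)
    (hsup : k ⊔ (mp ⊔ mn) = ⊤)
    (hd1 : Disjoint k (mp ⊔ mn))
    (hd2 : Disjoint mp mn)
    (hkk : ∀ x ∈ k, ∀ y ∈ k, bra x y ∈ k)
    (hkp : ∀ x ∈ k, ∀ y ∈ mp, bra x y ∈ mp)
    (hkn : ∀ x ∈ k, ∀ y ∈ mn, bra x y ∈ mn)
    (hpp : ∀ x ∈ mp, ∀ y ∈ mp, bra x y = 0)
    (hnn : ∀ x ∈ mn, ∀ y ∈ mn, bra x y = 0)
    (hpn : ∀ x ∈ mp, ∀ y ∈ mn, bra x y ∈ k)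
    (J : L →ₗ[ℂ] L)
    (hJp : ∀ x ∈ mp, J x = Complex.I • x)
    (hJn : ∀ x ∈ mn, J x = -(Complex.I • x))
    (Υ : L)
    (hUk : ∀ X ∈ k, bra Υ X = 0)
    (hUm : ∀ W ∈ mp ⊔ mn, bra Υ W = J W)
    (Z A : L) (hZ : Z ∈ mp ⊔ mn) (hA : A ∈ mp ⊔ mn) :
    expOp (adC bra Z) A - expOp (adC bra (-Z)) A ∈ k ∧
    bra Υ (expOp (adC bra Z) A - expOp (adC bra (-Z)) A) = 0 :=
  statement7_general bra halt k mp mn hkp hkn hpp hnn hpn Υ hUk Z A hZ hA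
end
end

section
/- The map P satisfies: (1) P(JZ) = J(P(Z)) for every Z ∈ m; (2) if Z ∈ m⁺ or Z ∈ m⁻, then P(Z) = Z; (3) P(-Z) = -P(Z) for every Z ∈ m. -/
/-!
Let `D = ad Υ`, which acts by `0`, `i`, `-i` on `k`, `m⁺`, `m⁻`. If `b c = 1`, a linear map acting
by `1`, `b`, `c` on `k`, `m⁺`, `m⁻` respects brackets of `m` with `k ⊕ m`, and such a map can be
taken to be a quadratic polynomial `σ = 1 + α D + β D²`, which then commutes with `D` and fixes `Υ`.
Since `ad_Z` preserves `k ⊕ m ⊕ ℂΥ` for `Z ∈ m`, we get `ad_{σZ}ⁿ Υ = σ (ad_Zⁿ Υ)`, hence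
`P(σZ) = σ P(Z)`, and `P(Z) ∈ m`. The twists `1 + D + D²` (equal to `J` on `m`) and `1 + 2D²`
(equal to `-1` on `m`) give (1) and (3). For `Z ∈ m^±` we have `ad_Z² Υ = ∓ i ⁅Z, Z⁆ = 0`, so
`exp(ad_Z) Υ = Υ - JZ` and `P(Z) = -J²Z = Z`.
-/

noncomputable section

variable {L : Type*} [NormedAddCommGroup L] [NormedSpace ℂ L] [FiniteDimensional ℂ L]

section Algebra

variable {R V : Type*} [CommRing R] [AddCommGroup V] [Module R V]

structure IsGradedBracket (bra : V →ₗ[R] V →ₗ[R] V) (k mp mn : Submodule R V) : Prop where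
  isAlt : bra.IsAlt
  bra_k_mp : ∀ x ∈ k, ∀ y ∈ mp, bra x y ∈ mp
  bra_k_mn : ∀ x ∈ k, ∀ y ∈ mn, bra x y ∈ mn
  bra_mp_mp : ∀ x ∈ mp, ∀ y ∈ mp, bra x y = 0
  bra_mn_mn : ∀ x ∈ mn, ∀ y ∈ mn, bra x y = 0
  bra_mp_mn : ∀ x ∈ mp, ∀ y ∈ mn, bra x y ∈ k

namespace IsGradedBracket

variable {bra : V →ₗ[R] V →ₗ[R] V} {k mp mn : Submodule R V}

theorem bra_swap (h : IsGradedBracket bra k mp mn) (x y : V) : bra x y = -bra y x :=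
  (h.isAlt.neg y x).symm

theorem bra_mem_sup_of_mem_k (h : IsGradedBracket bra k mp mn) {Z X : V} (hZ : Z ∈ mp ⊔ mn)
    (hX : X ∈ k) : bra Z X ∈ mp ⊔ mn := by
  obtain ⟨Zp, hZp, Zn, hZn, rfl⟩ := Submodule.mem_sup.1 hZ
  rw [map_add, LinearMap.add_apply, h.bra_swap Zp, h.bra_swap Zn]
  exact add_mem (Submodule.mem_sup_left (neg_mem (h.bra_k_mp X hX Zp hZp)))
    (Submodule.mem_sup_right (neg_mem (h.bra_k_mn X hX Zn hZn)))

theorem bra_mem_k_of_mem_sup (h : IsGradedBracket bra k mp mn) {Z X : V} (hZ : Z ∈ mp ⊔ mn)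
    (hX : X ∈ mp ⊔ mn) : bra Z X ∈ k := by
  obtain ⟨Zp, hZp, Zn, hZn, rfl⟩ := Submodule.mem_sup.1 hZ
  obtain ⟨Xp, hXp, Xn, hXn, rfl⟩ := Submodule.mem_sup.1 hX
  simp only [map_add, LinearMap.add_apply, h.bra_mp_mp Zp hZp Xp hXp,
    h.bra_mn_mn Zn hZn Xn hXn, zero_add, add_zero, h.bra_swap Zn Xp]
  exact add_mem (neg_mem (h.bra_mp_mn Xp hXp Zn hZn)) (h.bra_mp_mn Zp hZp Xn hXn)

/-- The bracket of homogeneous elements lands in the component whose scalar is the product of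
theirs. -/
theorem map_bra (h : IsGradedBracket bra k mp mn) {σ : V →ₗ[R] V} {b c : R} (hbc : b * c = 1)
    (hk : ∀ x ∈ k, σ x = x) (hp : ∀ x ∈ mp, σ x = b • x) (hn : ∀ x ∈ mn, σ x = c • x)
    {Z X : V} (hZ : Z ∈ mp ⊔ mn) (hX : X ∈ k ⊔ (mp ⊔ mn)) :
    σ (bra Z X) = bra (σ Z) (σ X) := by
  have of_smul {Z X : V} {s t : R} (hZ : σ Z = s • Z) (hX : σ X = t • X)
      (hZX : σ (bra Z X) = (s * t) • bra Z X) : σ (bra Z X) = bra (σ Z) (σ X) := by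
    rw [hZX, hZ, hX, map_smul, map_smul, LinearMap.smul_apply, smul_smul, mul_comm]
  have hk' : ∀ x ∈ k, σ x = (1 : R) • x := fun x hx => (hk x hx).trans (one_smul R x).symm
  have homogeneous {Z X : V} (hZ : Z ∈ mp ∨ Z ∈ mn) (hX : X ∈ k ∨ X ∈ mp ∨ X ∈ mn) :
      σ (bra Z X) = bra (σ Z) (σ X) := by
    rcases hZ with hZ | hZ <;> rcases hX with hX | hX | hX
    · refine of_smul (hp Z hZ) (hk' X hX) ?_
      rw [mul_one, h.bra_swap]
      exact hp _ (neg_mem (h.bra_k_mp X hX Z hZ))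
    · exact of_smul (hp Z hZ) (hp X hX) (by rw [h.bra_mp_mp Z hZ X hX, map_zero, smul_zero])
    · exact of_smul (hp Z hZ) (hn X hX) (by rw [hbc, one_smul]; exact hk _ (h.bra_mp_mn Z hZ X hX))
    · refine of_smul (hn Z hZ) (hk' X hX) ?_
      rw [mul_one, h.bra_swap]
      exact hn _ (neg_mem (h.bra_k_mn X hX Z hZ))
    · refine of_smul (hn Z hZ) (hp X hX) ?_
      rw [mul_comm, hbc, one_smul, h.bra_swap]
      exact hk _ (neg_mem (h.bra_mp_mn X hX Z hZ))
    · exact of_smul (hn Z hZ) (hn X hX) (by rw [h.bra_mn_mn Z hZ X hX, map_zero, smul_zero])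
  obtain ⟨Zp, hZp, Zn, hZn, rfl⟩ := Submodule.mem_sup.1 hZ
  obtain ⟨Xk, hXk, Xm, hXm, rfl⟩ := Submodule.mem_sup.1 hX
  obtain ⟨Xp, hXp, Xn, hXn, rfl⟩ := Submodule.mem_sup.1 hXm
  simp only [map_add, LinearMap.add_apply, homogeneous (.inl hZp), homogeneous (.inr hZn),
    hXk, hXp, hXn, true_or, or_true]

end IsGradedBracket

end Algebra

section GradingElement

variable {V : Type*} [AddCommGroup V] [Module ℂ V]

structure IsGradingElement (bra : V →ₗ[ℂ] V →ₗ[ℂ] V) (k mp mn : Submodule ℂ V) (Υ : V) :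
    Prop where
  bra_of_mem_k : ∀ x ∈ k, bra Υ x = 0
  bra_of_mem_mp : ∀ x ∈ mp, bra Υ x = Complex.I • x
  bra_of_mem_mn : ∀ x ∈ mn, bra Υ x = (-Complex.I) • x

namespace IsGradingElement

variable {bra : V →ₗ[ℂ] V →ₗ[ℂ] V} {k mp mn : Submodule ℂ V} {Υ : V}

theorem bra_mem_sup (hΥ : IsGradingElement bra k mp mn Υ) {x : V} (hx : x ∈ mp ⊔ mn) :
    bra Υ x ∈ mp ⊔ mn := by
  obtain ⟨xp, hxp, xn, hxn, rfl⟩ := Submodule.mem_sup.1 hx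
  rw [map_add, hΥ.bra_of_mem_mp xp hxp, hΥ.bra_of_mem_mn xn hxn]
  exact add_mem (Submodule.mem_sup_left (mp.smul_mem _ hxp))
    (Submodule.mem_sup_right (mn.smul_mem _ hxn))

theorem bra_mem_sup_of_mem_span (hbra : IsGradedBracket bra k mp mn)
    (hΥ : IsGradingElement bra k mp mn Υ) {X : V} (hX : X ∈ k ⊔ (mp ⊔ mn) ⊔ ℂ ∙ Υ) :
    bra Υ X ∈ mp ⊔ mn := by
  obtain ⟨X₀, hX₀, _, hΥ', rfl⟩ := Submodule.mem_sup.1 hX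
  obtain ⟨Xk, hXk, Xm, hXm, rfl⟩ := Submodule.mem_sup.1 hX₀
  obtain ⟨a, rfl⟩ := Submodule.mem_span_singleton.1 hΥ'
  rw [map_add, map_add, map_smul, hbra.isAlt, smul_zero, add_zero, hΥ.bra_of_mem_k Xk hXk,
    zero_add]
  exact hΥ.bra_mem_sup hXm

theorem bra_mem_of_mem_span (hbra : IsGradedBracket bra k mp mn)
    (hΥ : IsGradingElement bra k mp mn Υ) {Z X : V} (hZ : Z ∈ mp ⊔ mn)
    (hX : X ∈ k ⊔ (mp ⊔ mn) ⊔ ℂ ∙ Υ) : bra Z X ∈ k ⊔ (mp ⊔ mn) ⊔ ℂ ∙ Υ := by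
  obtain ⟨X₀, hX₀, _, hΥ', rfl⟩ := Submodule.mem_sup.1 hX
  obtain ⟨Xk, hXk, Xm, hXm, rfl⟩ := Submodule.mem_sup.1 hX₀
  obtain ⟨a, rfl⟩ := Submodule.mem_span_singleton.1 hΥ'
  rw [map_add, map_add, map_smul, hbra.bra_swap Z Υ]
  refine Submodule.mem_sup_left (add_mem (add_mem ?_ ?_) (Submodule.smul_mem _ _ (neg_mem ?_)))
  · exact Submodule.mem_sup_right (hbra.bra_mem_sup_of_mem_k hZ hXk)
  · exact Submodule.mem_sup_left (hbra.bra_mem_k_of_mem_sup hZ hXm)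
  · exact Submodule.mem_sup_right (hΥ.bra_mem_sup hZ)

end IsGradingElement

end GradingElement

section Exponential

theorem hasSum_expOp_apply (A : L →L[ℂ] L) (x : L) :
    HasSum (fun n : ℕ => (n.factorial : ℂ)⁻¹ • (A ^ n) x) (expOp A x) :=
  (NormedSpace.expSeries_summable' (𝕂 := ℂ) A).hasSum.mapL (ContinuousLinearMap.apply ℂ L x)

theorem map_expOp_apply_eq {M : Type*} [NormedAddCommGroup M] [NormedSpace ℂ M]
    (f g : L →L[ℂ] M) {A B : L →L[ℂ] L} {x y : L} (h : ∀ n, f ((A ^ n) x) = g ((B ^ n) y)) :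
    f (expOp A x) = g (expOp B y) := by
  refine ((hasSum_expOp_apply A x).mapL f).unique ?_
  simpa only [map_smul, h] using (hasSum_expOp_apply B y).mapL g

theorem ContinuousLinearMap.pow_apply_mem {R E : Type*} [Semiring R] [TopologicalSpace E]
    [AddCommMonoid E] [Module R E] {A : E →L[R] E} {W : Submodule R E} (hA : ∀ w ∈ W, A w ∈ W)
    {x : E} (hx : x ∈ W) (n : ℕ) : (A ^ n) x ∈ W := by
  have := Module.End.pow_apply_mem_of_forall_mem (f' := (A : E →ₗ[R] E)) n hA x hx
  rwa [← ContinuousLinearMap.toLinearMap_pow] at this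

theorem expOp_apply_mem {A : L →L[ℂ] L} {W : Submodule ℂ L} (hA : ∀ w ∈ W, A w ∈ W) {x : L}
    (hx : x ∈ W) : expOp A x ∈ W :=
  W.closed_of_finiteDimensional.mem_of_tendsto (hasSum_expOp_apply A x).tendsto_sum_nat
    (.of_forall fun _ => sum_mem fun i _ => W.smul_mem _ (A.pow_apply_mem hA hx i))

theorem expOp_apply_of_apply_apply_eq_zero {A : L →L[ℂ] L} {x : L} (h : A (A x) = 0) :
    expOp A x = x + A x := by
  have hpow (n : ℕ) : (A ^ (n + 2)) x = 0 := by
    rw [pow_add, mul_apply_eq_comp, sq, mul_apply_eq_comp, h, map_zero]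
  refine ((hasSum_expOp_apply A x).unique
    (hasSum_sum_of_ne_finset_zero (s := Finset.range 2) fun n hn => ?_)).trans ?_
  · obtain ⟨n, rfl⟩ := Nat.exists_eq_add_of_le' (not_lt.1 (Finset.mem_range.not.1 hn))
    rw [hpow, smul_zero]
  · simp [Finset.sum_range_succ]

end Exponential

section Twist

variable {bra : L →ₗ[ℂ] L →ₗ[ℂ] L} {k mp mn : Submodule ℂ L} {Υ : L}

theorem adC_apply (bra : L →ₗ[ℂ] L →ₗ[ℂ] L) (Z x : L) : adC bra Z x = bra Z x := rfl

def gradingTwist (bra : L →ₗ[ℂ] L →ₗ[ℂ] L) (Υ : L) (α β : ℂ) : L →L[ℂ] L :=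
  1 + α • adC bra Υ + β • adC bra Υ ^ 2

theorem gradingTwist_apply_of_bra_eq_smul {α β μ : ℂ} {x : L} (hx : bra Υ x = μ • x) :
    gradingTwist bra Υ α β x = (1 + α * μ + β * μ ^ 2) • x := by
  simp only [gradingTwist, add_apply, smul_apply, sq, mul_apply_eq_comp,
    one_apply_eq_self, adC_apply, hx, map_smul, smul_smul, add_smul, one_smul]

theorem gradingTwist_apply_of_bra_eq_zero {α β : ℂ} {x : L} (hx : bra Υ x = 0) :
    gradingTwist bra Υ α β x = x := by
  simp [gradingTwist_apply_of_bra_eq_smul (μ := 0) (by rw [hx, zero_smul])]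

theorem gradingTwist_bra (α β : ℂ) (x : L) :
    gradingTwist bra Υ α β (bra Υ x) = bra Υ (gradingTwist bra Υ α β x) := by
  simp only [gradingTwist, add_apply, smul_apply, sq, mul_apply_eq_comp,
    one_apply_eq_self, adC_apply, map_add, map_smul]

namespace IsGradingElement

variable {α β : ℂ} {x : L}

theorem gradingTwist_apply_of_mem_k (hΥ : IsGradingElement bra k mp mn Υ) (hx : x ∈ k) :
    gradingTwist bra Υ α β x = x :=
  gradingTwist_apply_of_bra_eq_zero (hΥ.bra_of_mem_k x hx)

theorem gradingTwist_apply_of_mem_mp (hΥ : IsGradingElement bra k mp mn Υ) (hx : x ∈ mp) :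
    gradingTwist bra Υ α β x = (1 + α * Complex.I - β) • x := by
  rw [gradingTwist_apply_of_bra_eq_smul (hΥ.bra_of_mem_mp x hx), Complex.I_sq]
  ring_nf

theorem gradingTwist_apply_of_mem_mn (hΥ : IsGradingElement bra k mp mn Υ) (hx : x ∈ mn) :
    gradingTwist bra Υ α β x = (1 - α * Complex.I - β) • x := by
  rw [gradingTwist_apply_of_bra_eq_smul (hΥ.bra_of_mem_mn x hx), neg_sq, Complex.I_sq]
  ring_nf

end IsGradingElement

end Twist

section PMap

variable {bra : L →ₗ[ℂ] L →ₗ[ℂ] L} {k mp mn : Submodule ℂ L} {Υ : L}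

def pMap (bra : L →ₗ[ℂ] L →ₗ[ℂ] L) (Υ Z : L) : L :=
  bra Υ (expOp (adC bra Z) Υ)

theorem pMap_mem (hbra : IsGradedBracket bra k mp mn) (hΥ : IsGradingElement bra k mp mn Υ)
    {Z : L} (hZ : Z ∈ mp ⊔ mn) : pMap bra Υ Z ∈ mp ⊔ mn :=
  hΥ.bra_mem_sup_of_mem_span hbra <|
    expOp_apply_mem (fun _ hX => hΥ.bra_mem_of_mem_span hbra hZ hX)
      (Submodule.mem_sup_right (Submodule.mem_span_singleton_self Υ))

theorem pMap_of_bra_eq_smul (hbra : IsGradedBracket bra k mp mn) {Z : L} {μ : ℂ}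
    (hZ : bra Υ Z = μ • Z) (hμ : μ * μ = -1) : pMap bra Υ Z = Z := by
  have hZΥ : bra Z Υ = -(μ • Z) := by rw [hbra.bra_swap, hZ]
  have hsq : adC bra Z (adC bra Z Υ) = 0 := by
    rw [adC_apply, adC_apply, hZΥ, map_neg, map_smul, hbra.isAlt, smul_zero, neg_zero]
  rw [pMap, expOp_apply_of_apply_apply_eq_zero hsq, adC_apply, hZΥ, map_add, hbra.isAlt,
    map_neg, map_smul, hZ, smul_smul, hμ, neg_one_smul, neg_neg, zero_add]

variable {α β : ℂ}

theorem gradingTwist_bra_eq (hbra : IsGradedBracket bra k mp mn)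
    (hΥ : IsGradingElement bra k mp mn Υ)
    (hαβ : (1 + α * Complex.I - β) * (1 - α * Complex.I - β) = 1)
    {Z X : L} (hZ : Z ∈ mp ⊔ mn) (hX : X ∈ k ⊔ (mp ⊔ mn) ⊔ ℂ ∙ Υ) :
    gradingTwist bra Υ α β (bra Z X) =
      bra (gradingTwist bra Υ α β Z) (gradingTwist bra Υ α β X) := by
  set σ := gradingTwist bra Υ α β
  obtain ⟨X₀, hX₀, _, hΥ', rfl⟩ := Submodule.mem_sup.1 hX
  obtain ⟨a, rfl⟩ := Submodule.mem_span_singleton.1 hΥ'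
  have hX₀' : σ (bra Z X₀) = bra (σ Z) (σ X₀) :=
    hbra.map_bra (σ := (σ : L →ₗ[ℂ] L)) hαβ
      (fun _ => hΥ.gradingTwist_apply_of_mem_k) (fun _ => hΥ.gradingTwist_apply_of_mem_mp)
      (fun _ => hΥ.gradingTwist_apply_of_mem_mn) hZ hX₀
  have hΥ₀ : σ (bra Z Υ) = bra (σ Z) (σ Υ) := by
    rw [gradingTwist_apply_of_bra_eq_zero (hbra.isAlt Υ), hbra.bra_swap, map_neg,
      gradingTwist_bra, ← hbra.bra_swap]
  simp only [map_add, map_smul, hX₀', hΥ₀]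

theorem pow_adC_gradingTwist_apply (hbra : IsGradedBracket bra k mp mn)
    (hΥ : IsGradingElement bra k mp mn Υ)
    (hαβ : (1 + α * Complex.I - β) * (1 - α * Complex.I - β) = 1)
    {Z : L} (hZ : Z ∈ mp ⊔ mn) (n : ℕ) :
    (adC bra (gradingTwist bra Υ α β Z) ^ n) Υ = gradingTwist bra Υ α β ((adC bra Z ^ n) Υ) := by
  have hW : ∀ X ∈ k ⊔ (mp ⊔ mn) ⊔ ℂ ∙ Υ, adC bra Z X ∈ k ⊔ (mp ⊔ mn) ⊔ ℂ ∙ Υ :=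
    fun _ hX => hΥ.bra_mem_of_mem_span hbra hZ hX
  have hΥW : Υ ∈ k ⊔ (mp ⊔ mn) ⊔ ℂ ∙ Υ :=
    Submodule.mem_sup_right (Submodule.mem_span_singleton_self Υ)
  induction n with
  | zero => exact (gradingTwist_apply_of_bra_eq_zero (hbra.isAlt Υ)).symm
  | succ n ih =>
    rw [pow_succ', mul_apply_eq_comp, ih, pow_succ', mul_apply_eq_comp, adC_apply, adC_apply,
      gradingTwist_bra_eq hbra hΥ hαβ hZ ((adC bra Z).pow_apply_mem hW hΥW n)]

theorem pMap_gradingTwist (hbra : IsGradedBracket bra k mp mn)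
    (hΥ : IsGradingElement bra k mp mn Υ)
    (hαβ : (1 + α * Complex.I - β) * (1 - α * Complex.I - β) = 1)
    {Z : L} (hZ : Z ∈ mp ⊔ mn) :
    pMap bra Υ (gradingTwist bra Υ α β Z) = gradingTwist bra Υ α β (pMap bra Υ Z) :=
  map_expOp_apply_eq (adC bra Υ) ((gradingTwist bra Υ α β).comp (adC bra Υ)) fun n => by
    rw [ContinuousLinearMap.comp_apply, adC_apply, adC_apply,
      pow_adC_gradingTwist_apply hbra hΥ hαβ hZ, gradingTwist_bra]

theorem gradingTwist_eq_of_mem_sup (hΥ : IsGradingElement bra k mp mn Υ) {f : L →ₗ[ℂ] L}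
    (hp : ∀ x ∈ mp, f x = (1 + α * Complex.I - β) • x)
    (hn : ∀ x ∈ mn, f x = (1 - α * Complex.I - β) • x)
    {x : L} (hx : x ∈ mp ⊔ mn) : gradingTwist bra Υ α β x = f x := by
  refine (sup_le (fun y hy => ?_) (fun y hy => ?_) : mp ⊔ mn ≤ LinearMap.eqLocus _ f) hx
  · exact (hΥ.gradingTwist_apply_of_mem_mp hy).trans (hp y hy).symm
  · exact (hΥ.gradingTwist_apply_of_mem_mn hy).trans (hn y hy).symm

end PMap

theorem statement10_general {L : Type*} [NormedAddCommGroup L] [NormedSpace ℂ L] [FiniteDimensional ℂ L]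
    (bra : L →ₗ[ℂ] L →ₗ[ℂ] L)
    (halt : ∀ x : L, bra x x = 0)
    (k mp mn : Submodule ℂ L)
    (hkp : ∀ x ∈ k, ∀ y ∈ mp, bra x y ∈ mp)
    (hkn : ∀ x ∈ k, ∀ y ∈ mn, bra x y ∈ mn)
    (hpp : ∀ x ∈ mp, ∀ y ∈ mp, bra x y = 0)
    (hnn : ∀ x ∈ mn, ∀ y ∈ mn, bra x y = 0)
    (hpn : ∀ x ∈ mp, ∀ y ∈ mn, bra x y ∈ k)
    (J : L →ₗ[ℂ] L)
    (hJp : ∀ x ∈ mp, J x = Complex.I • x)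
    (hJn : ∀ x ∈ mn, J x = -(Complex.I • x))
    (Υ : L)
    (hUk : ∀ X ∈ k, bra Υ X = 0)
    (hUm : ∀ W ∈ mp ⊔ mn, bra Υ W = J W) :
    (∀ Z ∈ mp ⊔ mn, bra Υ (expOp (adC bra (J Z)) Υ) = J (bra Υ (expOp (adC bra Z) Υ))) ∧
    (∀ Z : L, (Z ∈ mp ∨ Z ∈ mn) → bra Υ (expOp (adC bra Z) Υ) = Z) ∧
    (∀ Z ∈ mp ⊔ mn, bra Υ (expOp (adC bra (-Z)) Υ) = -(bra Υ (expOp (adC bra Z) Υ))) := by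
  have hbra : IsGradedBracket bra k mp mn := ⟨halt, hkp, hkn, hpp, hnn, hpn⟩
  have hΥ : IsGradingElement bra k mp mn Υ :=
    ⟨hUk, fun x hx => (hUm x (Submodule.mem_sup_left hx)).trans (hJp x hx),
      fun x hx => by rw [hUm x (Submodule.mem_sup_right hx), hJn x hx, neg_smul]⟩
  have hJ : ∀ x ∈ mp ⊔ mn, gradingTwist bra Υ 1 1 x = J x :=
    fun x => gradingTwist_eq_of_mem_sup hΥ (fun y hy => by rw [hJp y hy]; norm_num)
      (fun y hy => by rw [hJn y hy]; norm_num)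
  have hneg : ∀ x ∈ mp ⊔ mn, gradingTwist bra Υ 0 2 x = (-LinearMap.id : L →ₗ[ℂ] L) x :=
    fun x => gradingTwist_eq_of_mem_sup hΥ (fun _ _ => by norm_num) (fun _ _ => by norm_num)
  refine ⟨fun Z hZ => ?_, fun Z hZ => ?_, fun Z hZ => ?_⟩
  · rw [← hJ Z hZ]
    exact (pMap_gradingTwist hbra hΥ (by norm_num) hZ).trans (hJ _ (pMap_mem hbra hΥ hZ))
  · rcases hZ with hZ | hZ
    · exact pMap_of_bra_eq_smul hbra (hΥ.bra_of_mem_mp Z hZ) Complex.I_mul_I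
    · exact pMap_of_bra_eq_smul hbra (hΥ.bra_of_mem_mn Z hZ) (by simp)
  · rw [show -Z = (-LinearMap.id : L →ₗ[ℂ] L) Z from rfl, ← hneg Z hZ]
    exact (pMap_gradingTwist hbra hΥ (by norm_num) hZ).trans (hneg _ (pMap_mem hbra hΥ hZ))

/-- The map P(Z) = ⁅Υ, exp(ad_Z)(Υ)⁆ satisfies: (1) P(JZ) = J(P(Z)) for Z ∈ m; (2) P(Z) = Z when Z ∈ m⁺ or Z ∈ m⁻; (3) P(-Z) = -P(Z) for Z ∈ m. -/
theorem statement10 {L : Type*} [NormedAddCommGroup L] [NormedSpace ℂ L] [FiniteDimensional ℂ L]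
    (bra : L →ₗ[ℂ] L →ₗ[ℂ] L)
    (halt : ∀ x : L, bra x x = 0)
    (hjac : ∀ x y z : L, bra x (bra y z) = bra (bra x y) z + bra y (bra x z))
    (k mp mn : Submodule ℂ L)
    (hsup : k ⊔ (mp ⊔ mn) = ⊤)
    (hd1 : Disjoint k (mp ⊔ mn))
    (hd2 : Disjoint mp mn)
    (hkk : ∀ x ∈ k, ∀ y ∈ k, bra x y ∈ k)
    (hkp : ∀ x ∈ k, ∀ y ∈ mp, bra x y ∈ mp)
    (hkn : ∀ x ∈ k, ∀ y ∈ mn, bra x y ∈ mn)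
    (hpp : ∀ x ∈ mp, ∀ y ∈ mp, bra x y = 0)
    (hnn : ∀ x ∈ mn, ∀ y ∈ mn, bra x y = 0)
    (hpn : ∀ x ∈ mp, ∀ y ∈ mn, bra x y ∈ k)
    (J : L →ₗ[ℂ] L)
    (hJp : ∀ x ∈ mp, J x = Complex.I • x)
    (hJn : ∀ x ∈ mn, J x = -(Complex.I • x))
    (Υ : L)
    (hUk : ∀ X ∈ k, bra Υ X = 0)
    (hUm : ∀ W ∈ mp ⊔ mn, bra Υ W = J W) :
    (∀ Z ∈ mp ⊔ mn, bra Υ (expOp (adC bra (J Z)) Υ) = J (bra Υ (expOp (adC bra Z) Υ))) ∧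
    (∀ Z : L, (Z ∈ mp ∨ Z ∈ mn) → bra Υ (expOp (adC bra Z) Υ) = Z) ∧
    (∀ Z ∈ mp ⊔ mn, bra Υ (expOp (adC bra (-Z)) Υ) = -(bra Υ (expOp (adC bra Z) Υ))) :=
  statement10_general bra halt k mp mn hkp hkn hpp hnn hpn J hJp hJn Υ hUk hUm
end
end

section
/- Let λ ∈ ℂ with λ ≠ 0, write ℓ = |λ|, and let u ∈ ℂ with |u| = 1 and λ = ℓ·u². Let c ∈ ℝ and set r = ½·arsinh(½(ℓ⁻¹+ℓ)·sinh(2c)) and s = ½·arctan(½(ℓ⁻¹-ℓ)·tanh(2c)). Let D = diag(1,-1) and consider the 2×2 complex matrices X = [[0, cλ],[c/λ, 0]], Y = [[0, -s·u²],[s·conj(u)², 0]], and W = [[0, r·u²],[r·conj(u)², 0]]. Then exp(X)·D·exp(X)⁻¹ = exp(Y)·exp(W)·D·exp(W)⁻¹·exp(Y)⁻¹. -/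
/-! `diag(1, -1)` anticommutes with every off-diagonal matrix `N`, so conjugating it by `exp N`
gives `exp (2N) * diag(1, -1)`, and the claim reduces to `exp (2X) = exp Y * exp (2W) * exp Y`.
Up to scalars the off-diagonal generators square to `±1`, so their exponentials are explicit
hyperbolic or circular rotations, and the reduced identity comes down to
`cos 2s * cosh 2r = cosh 2c`, `sin 2s * cosh 2r = (ℓ⁻¹ - ℓ)/2 * sinh 2c` and
`sinh 2r = (ℓ⁻¹ + ℓ)/2 * sinh 2c`. These follow from the definitions of `r` and `s` since
`((ℓ⁻¹ + ℓ)/2)² = 1 + ((ℓ⁻¹ - ℓ)/2)²`. -/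

open NormedSpace

section InvolutiveExp

variable {𝔸 : Type*} [NormedRing 𝔸] [NormedAlgebra ℂ 𝔸] [CompleteSpace 𝔸] {N : 𝔸}

theorem exp_smul_of_mul_self_eq_one (hN : N * N = 1) (z : ℂ) :
    exp (z • N) = Complex.cosh z • (1 : 𝔸) + Complex.sinh z • N := by
  have hpow (n : ℕ) : N ^ (2 * n) = 1 := by rw [pow_mul, sq, hN, one_pow]
  refine (exp_series_hasSum_exp' (𝕂 := ℂ) (z • N)).unique (HasSum.even_add_odd ?_ ?_)
  · convert (Complex.hasSum_cosh z).smul_const (1 : 𝔸) using 2 with n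
    rw [smul_pow, hpow, smul_smul, div_eq_inv_mul]
  · convert (Complex.hasSum_sinh z).smul_const N using 2 with n
    rw [smul_pow, pow_succ N, hpow, one_mul, smul_smul, div_eq_inv_mul]

theorem exp_smul_of_mul_self_eq_neg_one (hN : N * N = -1) (z : ℂ) :
    exp (z • N) = Complex.cos z • (1 : 𝔸) + Complex.sin z • N := by
  have hIN : (-Complex.I • N) * (-Complex.I • N) = 1 := by
    rw [smul_mul_smul_comm, hN]; simp
  have h := exp_smul_of_mul_self_eq_one hIN (z * Complex.I)
  rw [smul_smul, mul_neg, mul_assoc, Complex.I_mul_I, mul_neg_one, neg_neg, Complex.cosh_mul_I,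
    Complex.sinh_mul_I, smul_smul] at h
  rw [h, mul_neg, mul_assoc, Complex.I_mul_I, mul_neg_one, neg_neg]

end InvolutiveExp

namespace Real

theorem cosh_arsinh_mul_sinh {A B : ℝ} (hAB : A ^ 2 = 1 + B ^ 2) (θ : ℝ) :
    cosh (arsinh (A * sinh θ)) = cosh θ * √(1 + (B * tanh θ) ^ 2) := by
  have hsq : 1 + (A * sinh θ) ^ 2 = cosh θ ^ 2 * (1 + (B * tanh θ) ^ 2) := by
    rw [tanh_eq_sinh_div_cosh]
    field_simp
    linear_combination sinh θ ^ 2 * hAB - cosh_sq' θ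
  rw [cosh_arsinh, hsq, sqrt_mul (sq_nonneg _), sqrt_sq (cosh_pos θ).le]

theorem cos_arctan_mul_tanh_mul_cosh_arsinh {A B : ℝ} (hAB : A ^ 2 = 1 + B ^ 2) (θ : ℝ) :
    cos (arctan (B * tanh θ)) * cosh (arsinh (A * sinh θ)) = cosh θ := by
  have : 0 < √(1 + (B * tanh θ) ^ 2) := sqrt_pos.mpr (by positivity)
  rw [cos_arctan, cosh_arsinh_mul_sinh hAB]
  field_simp

theorem sin_arctan_mul_tanh_mul_cosh_arsinh {A B : ℝ} (hAB : A ^ 2 = 1 + B ^ 2) (θ : ℝ) :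
    sin (arctan (B * tanh θ)) * cosh (arsinh (A * sinh θ)) = B * sinh θ := by
  have : 0 < √(1 + (B * tanh θ) ^ 2) := sqrt_pos.mpr (by positivity)
  rw [sin_arctan, cosh_arsinh_mul_sinh hAB, tanh_eq_sinh_div_cosh]
  field_simp [(cosh_pos θ).ne']

end Real

namespace Matrix

section Anticommute

variable {m 𝔸 : Type*} [Fintype m] [DecidableEq m] [NormedCommRing 𝔸] [NormedAlgebra ℚ 𝔸]
  [CompleteSpace 𝔸] {D M : Matrix m m 𝔸}

theorem mul_inv_exp_of_anticommute (hD : D * D = 1) (hDM : D * M = -(M * D)) :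
    D * (exp M)⁻¹ = exp M * D := by
  let U : (Matrix m m 𝔸)ˣ := ⟨D, D, hD, hD⟩
  have hconj : exp (U * -M * U⁻¹) = D * exp (-M) * D := exp_units_conj U (-M)
  rw [show (U : Matrix m m 𝔸) * -M * ↑U⁻¹ = M by
    change D * -M * D = M; rw [mul_neg, hDM, neg_neg, mul_assoc, hD, mul_one]] at hconj
  rw [← exp_neg, hconj, mul_assoc _ D D, hD, mul_one]

theorem exp_mul_mul_inv_exp_of_anticommute (hD : D * D = 1) (hDM : D * M = -(M * D)) :
    exp M * D * (exp M)⁻¹ = exp (M + M) * D := by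
  rw [mul_assoc, mul_inv_exp_of_anticommute hD hDM, ← mul_assoc,
    exp_add_of_commute _ _ (Commute.refl M)]

theorem exp_conj_eq_of_anticommute {X Y W : Matrix m m 𝔸} (hD : D * D = 1)
    (hDX : D * X = -(X * D)) (hDY : D * Y = -(Y * D)) (hDW : D * W = -(W * D))
    (h : exp (X + X) = exp Y * exp (W + W) * exp Y) :
    exp X * D * (exp X)⁻¹ = exp Y * (exp W * D * (exp W)⁻¹) * (exp Y)⁻¹ := by
  rw [exp_mul_mul_inv_exp_of_anticommute hD hDX, exp_mul_mul_inv_exp_of_anticommute hD hDW,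
    mul_assoc, mul_assoc, mul_inv_exp_of_anticommute hD hDY, h]
  simp only [mul_assoc]

end Anticommute

theorem diag_one_neg_one_mul_antidiag {R : Type*} [Ring R] (a b : R) :
    !![1, 0; 0, -1] * !![0, a; b, 0] = -(!![0, a; b, 0] * !![(1 : R), 0; 0, -1]) := by
  simp

theorem exp_smul_antidiag_of_mul_eq_one {a b : ℂ} (hab : a * b = 1) (z : ℂ) :
    exp (z • !![0, a; b, 0]) =
      !![Complex.cosh z, a * Complex.sinh z; b * Complex.sinh z, Complex.cosh z] := by
  have hN : !![0, a; b, 0] * !![0, a; b, 0] = 1 := by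
    rw [mul_fin_two, one_fin_two]; simp [mul_comm b, hab]
  -- matrices have no global norm: borrow the operator norm to apply the normed-algebra lemma
  have h : exp (z • !![0, a; b, 0]) = Complex.cosh z • 1 + Complex.sinh z • !![0, a; b, 0] :=
    open scoped Norms.Operator in exp_smul_of_mul_self_eq_one hN z
  rw [h, one_fin_two]
  ext i j; fin_cases i <;> fin_cases j <;> simp [mul_comm]

theorem exp_smul_antidiag_of_mul_eq_neg_one {a b : ℂ} (hab : a * b = -1) (z : ℂ) :
    exp (z • !![0, a; b, 0]) =
      !![Complex.cos z, a * Complex.sin z; b * Complex.sin z, Complex.cos z] := by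
  have hN : !![0, a; b, 0] * !![0, a; b, 0] = -1 := by
    rw [mul_fin_two, one_fin_two]; simp [mul_comm b, hab]
  have h : exp (z • !![0, a; b, 0]) = Complex.cos z • 1 + Complex.sin z • !![0, a; b, 0] :=
    open scoped Norms.Operator in exp_smul_of_mul_self_eq_neg_one hN z
  rw [h, one_fin_two]
  ext i j; fin_cases i <;> fin_cases j <;> simp [mul_comm]

theorem exp_smul_antidiag_eq_exp_mul_exp_mul_exp {ℓ θ ρ s : ℝ} (hℓ : ℓ ≠ 0) {v w : ℂ}
    (hvw : v * w = 1) (hcos : Real.cos (2 * s) * Real.cosh ρ = Real.cosh θ)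
    (hsin : Real.sin (2 * s) * Real.cosh ρ = (ℓ⁻¹ - ℓ) / 2 * Real.sinh θ)
    (hsinh : Real.sinh ρ = (ℓ⁻¹ + ℓ) / 2 * Real.sinh θ) :
    exp ((θ : ℂ) • !![0, ℓ * v; (ℓ : ℂ)⁻¹ * w, 0]) =
      exp ((s : ℂ) • !![0, -v; w, 0]) * exp ((ρ : ℂ) • !![0, v; w, 0]) *
        exp ((s : ℂ) • !![0, -v; w, 0]) := by
  have hℓv : (ℓ * v) * ((ℓ : ℂ)⁻¹ * w) = 1 := by
    rw [mul_mul_mul_comm, mul_inv_cancel₀ (by exact_mod_cast hℓ), one_mul, hvw]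
  rw [exp_smul_antidiag_of_mul_eq_one hℓv, exp_smul_antidiag_of_mul_eq_one hvw,
    exp_smul_antidiag_of_mul_eq_neg_one (by rw [neg_mul, hvw])]
  have hcosC : (Complex.cos s ^ 2 - Complex.sin s ^ 2) * Complex.cosh ρ = Complex.cosh θ := by
    rw [← Complex.cos_two_mul']; exact_mod_cast hcos
  have hsinC : 2 * Complex.sin s * Complex.cos s * Complex.cosh ρ =
      ((ℓ : ℂ)⁻¹ - ℓ) / 2 * Complex.sinh θ := by
    rw [← Complex.sin_two_mul]; exact_mod_cast hsin
  have hsinhC : Complex.sinh ρ = ((ℓ : ℂ)⁻¹ + ℓ) / 2 * Complex.sinh θ := by exact_mod_cast hsinh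
  have hpyth := Complex.cos_sq_add_sin_sq (s : ℂ)
  ext i j; fin_cases i <;> fin_cases j <;> simp [mul_apply]
  · linear_combination -hcosC + Complex.sin s ^ 2 * Complex.cosh ρ * hvw
  · linear_combination -(v * Complex.sin s ^ 2 * Complex.sinh ρ) * hvw
      - v * Complex.sinh ρ * hpyth + v * hsinC - v * hsinhC
  · linear_combination -(w * Complex.sin s ^ 2 * Complex.sinh ρ) * hvw
      - w * Complex.sinh ρ * hpyth - w * hsinC - w * hsinhC
  · linear_combination -hcosC + Complex.sin s ^ 2 * Complex.cosh ρ * hvw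

end Matrix

/-- Let λ ≠ 0, ℓ = |λ|, u with |u| = 1 and λ = ℓu².  For c ∈ ℝ let
r = ½ arsinh(½(ℓ⁻¹+ℓ)sinh 2c) and s = ½ arctan(½(ℓ⁻¹-ℓ)tanh 2c), and set D = diag(1,-1),
X = [[0, cλ],[c/λ, 0]], Y = [[0, -su²],[s conj(u)², 0]], W = [[0, ru²],[r conj(u)², 0]].
Then exp X · D · (exp X)⁻¹ = exp Y · exp W · D · (exp W)⁻¹ · (exp Y)⁻¹. -/
theorem statement18 (l u : ℂ) (hl : l ≠ 0) (hu : ‖u‖ = 1)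
    (hlu : l = (‖l‖ : ℂ) * u ^ 2)
    (c r s : ℝ)
    (hr : r = Real.arsinh ((‖l‖⁻¹ + ‖l‖) / 2 * Real.sinh (2 * c)) / 2)
    (hs : s = Real.arctan ((‖l‖⁻¹ - ‖l‖) / 2 * Real.tanh (2 * c)) / 2)
    (D X Y W : Matrix (Fin 2) (Fin 2) ℂ)
    (hD : D = !![1, 0; 0, -1])
    (hX : X = !![0, (c : ℂ) * l; (c : ℂ) / l, 0])
    (hY : Y = !![0, -((s : ℂ) * u ^ 2); (s : ℂ) * (starRingEnd ℂ u) ^ 2, 0])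
    (hW : W = !![0, (r : ℂ) * u ^ 2; (r : ℂ) * (starRingEnd ℂ u) ^ 2, 0]) :
    NormedSpace.exp X * D * (NormedSpace.exp X)⁻¹ =
      NormedSpace.exp Y * (NormedSpace.exp W * D * (NormedSpace.exp W)⁻¹) *
        (NormedSpace.exp Y)⁻¹ := by
  have hℓ : ‖l‖ ≠ 0 := norm_ne_zero_iff.mpr hl
  generalize ‖l‖ = ℓ at hℓ hlu hr hs
  subst hlu hD
  have hv : u ^ 2 * starRingEnd ℂ u ^ 2 = 1 := by
    rw [← mul_pow, Complex.mul_conj, Complex.normSq_eq_norm_sq, hu]; norm_num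
  have hAB : ((ℓ⁻¹ + ℓ) / 2) ^ 2 = 1 + ((ℓ⁻¹ - ℓ) / 2) ^ 2 := by field_simp; ring
  have h2r : Real.arsinh ((ℓ⁻¹ + ℓ) / 2 * Real.sinh (2 * c)) = 2 * r := by rw [hr]; ring
  have h2s : Real.arctan ((ℓ⁻¹ - ℓ) / 2 * Real.tanh (2 * c)) = 2 * s := by rw [hs]; ring
  refine Matrix.exp_conj_eq_of_anticommute (by simp [Matrix.one_fin_two])
    (hX ▸ Matrix.diag_one_neg_one_mul_antidiag _ _) (hY ▸ Matrix.diag_one_neg_one_mul_antidiag _ _)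
    (hW ▸ Matrix.diag_one_neg_one_mul_antidiag _ _) ?_
  have hX2 : X + X = ((2 * c : ℝ) : ℂ) • !![0, ℓ * u ^ 2; (ℓ : ℂ)⁻¹ * starRingEnd ℂ u ^ 2, 0] := by
    rw [hX, div_eq_mul_inv, mul_inv, inv_eq_of_mul_eq_one_right hv]
    ext i j; fin_cases i <;> fin_cases j <;> simp <;> ring
  have hW2 : W + W = ((2 * r : ℝ) : ℂ) • !![0, u ^ 2; starRingEnd ℂ u ^ 2, 0] := by
    rw [hW]; ext i j; fin_cases i <;> fin_cases j <;> simp <;> ring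
  have hY' : Y = (s : ℂ) • !![0, -u ^ 2; starRingEnd ℂ u ^ 2, 0] := by
    rw [hY]; ext i j; fin_cases i <;> fin_cases j <;> simp
  rw [hX2, hW2, hY']
  refine Matrix.exp_smul_antidiag_eq_exp_mul_exp_mul_exp hℓ hv ?_ ?_ ?_
  · rw [← h2r, ← h2s]; exact Real.cos_arctan_mul_tanh_mul_cosh_arsinh hAB _
  · rw [← h2r, ← h2s]; exact Real.sin_arctan_mul_tanh_mul_cosh_arsinh hAB _
  · rw [← h2r, Real.sinh_arsinh]
end
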